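/- For all positive integers k, t, the 2t-th moment of the permanent of a k×k i.i.d. complex Gaussian matrix satisfies E|Perm(M)|^{2t} ≥ (k!)^{2t}·(t!)^{2k}/(kt)!. -/

import Mathlib

open MeasureTheory ProbabilityTheory

/-- `M` is a random `k × k` matrix whose entries are i.i.d. standard complex Gaussian
random variables, characterized by independence of the entries together with the
mixed moments `E[x^a * conj x ^ b] = a! * δ_{a b}` of a standard complex Gaussian. -/
def IsIIDStdComplexGaussianMatrix {Ω : Type*} [MeasurableSpace Ω] (P : Measure Ω)
    {k : ℕ} (M : Ω → Matrix (Fin k) (Fin k) ℂ) : Prop :=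
  (∀ i j, Measurable fun ω => M ω i j) ∧
  iIndepFun (fun p : Fin k × Fin k => fun ω => M ω p.1 p.2) P ∧
  (∀ i j (a b : ℕ), Integrable
      (fun ω => (M ω i j) ^ a * (starRingEnd ℂ) (M ω i j) ^ b) P) ∧
  (∀ i j (a b : ℕ),
    ∫ ω, (M ω i j) ^ a * (starRingEnd ℂ) (M ω i j) ^ b ∂P
      = if a = b then (a.factorial : ℂ) else 0)

/-!
Write `A(π) = ∑ₛ P(πₛ)` for the sum of the permutation matrices of a `t`-tuple `π` of
permutations. Then `Per(M)^t = ∑_π ∏ M_ij^A(π)_ij`, and `A(π)` is a contingency table with all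
margins equal to `t`. Since the entries are independent with `E[x^a x̄^b] = a! δ_ab`,
`E|Per M|^(2t) = ∑_{π, σ : A(π) = A(σ)} ∏ A(π)_ij!`. Cauchy–Schwarz over the fibres of `A`
bounds this below by `(k!)^(2t) / ∑_A (∏ A_ij!)⁻¹`, the sum running over all tables with
margins `t`; comparing the coefficients of `x₁^t ⋯ x_k^t` in
`∏ᵢ (x₁ + ⋯ + x_k)^t = (x₁ + ⋯ + x_k)^(kt)` evaluates that sum as `(kt)! / (t!)^(2k)`.
-/

open Finset
open scoped Nat

theorem ProbabilityTheory.iIndepFun.integrable_fun_prod_comp {Ω ι 𝕜 : Type*}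
    [MeasurableSpace Ω] {μ : Measure Ω} [Fintype ι] [RCLike 𝕜] {𝓧 : ι → Type*}
    {m𝓧 : ∀ i, MeasurableSpace (𝓧 i)} {X : (i : ι) → Ω → 𝓧 i} {f : (i : ι) → 𝓧 i → 𝕜}
    (hX : iIndepFun X μ) (mX : ∀ i, AEMeasurable (X i) μ)
    (hf : ∀ i, Integrable (f i) (μ.map (X i))) :
    Integrable (fun ω => ∏ i, f i (X i ω)) μ := by
  have := hX.isProbabilityMeasure
  have mXpi : AEMeasurable (fun ω i => X i ω) μ := by fun_prop
  have hprod : Integrable (fun x : (i : ι) → 𝓧 i => ∏ i, f i (x i)) (μ.map fun ω i => X i ω) := by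
    rw [hX.map_fun_eq_pi_map mX]
    exact Integrable.fintype_prod_dep hf
  exact (integrable_map_measure hprod.aestronglyMeasurable mXpi).mp hprod

theorem Nat.cast_multinomial {α K : Type*} [Field K] [CharZero K] (s : Finset α) (f : α → ℕ) :
    (Nat.multinomial s f : K) = (∑ i ∈ s, f i)! / ∏ i ∈ s, ((f i)! : K) := by
  rw [eq_div_iff (prod_ne_zero_iff.2 fun i _ => by exact_mod_cast (f i).factorial_ne_zero),
    mul_comm]
  exact_mod_cast Nat.multinomial_spec s f

section ContingencyTables

variable {ι κ : Type*} [Fintype ι] [Fintype κ] [DecidableEq ι] [DecidableEq κ]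

def contingencyTables (r : ι → ℕ) (c : κ → ℕ) : Finset (ι → κ → ℕ) :=
  {g ∈ Fintype.piFinset fun i => piAntidiag univ (r i) | ∀ j, ∑ i, g i j = c j}

open MvPolynomial in
theorem sum_contingencyTables_prod_multinomial (r : ι → ℕ) (c : κ → ℕ)
    (h : ∑ i, r i = ∑ j, c j) :
    ∑ g ∈ contingencyTables r c, ∏ i, Nat.multinomial univ (g i) = Nat.multinomial univ c := by
  set d : κ →₀ ℕ := Finsupp.indicator univ fun j _ => c j
  have hdc : ⇑d = c := by ext j; simp [d]
  have hd (e : κ → ℕ) : d = Finsupp.indicator univ (fun j _ => e j) ↔ ∀ j, e j = c j := by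
    simp [d, Finsupp.ext_iff, eq_comm]
  have hexpand : (∑ j, X j : MvPolynomial κ ℕ) ^ ∑ i, r i =
      ∑ g ∈ Fintype.piFinset fun i => piAntidiag univ (r i),
        ((∏ i, Nat.multinomial univ (g i) : ℕ) : MvPolynomial κ ℕ) * ∏ j, X j ^ ∑ i, g i j := by
    rw [← prod_pow_eq_pow_sum]
    simp_rw [sum_pow_eq_sum_piAntidiag]
    rw [prod_univ_sum]
    refine sum_congr rfl fun g _ => ?_
    rw [prod_mul_distrib, Nat.cast_prod, prod_comm]
    simp_rw [prod_pow_eq_pow_sum]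
  have hcoeff : coeff d ((∑ j, X j : MvPolynomial κ ℕ) ^ ∑ i, r i) = Nat.multinomial univ c := by
    rw [coeff_sum_X_pow_of_fintype, if_pos,
      Finsupp.multinomial_eq_of_support_subset (subset_univ _)]
    · rw [hdc, Nat.cast_id]
    · simp [d, Finsupp.sum_fintype, h]
  rw [← hcoeff, hexpand, coeff_sum, contingencyTables, sum_filter]
  refine sum_congr rfl fun g _ => ?_
  rw [← C_eq_coe_nat, coeff_C_mul, coeff_prod_X_pow]
  simp [hd]

theorem sum_contingencyTables_inv_prod_factorial {K : Type*} [Field K] [CharZero K]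
    (r : ι → ℕ) (c : κ → ℕ) (h : ∑ i, r i = ∑ j, c j) :
    ∑ g ∈ contingencyTables r c, (∏ i, ∏ j, ((g i j)! : K))⁻¹ =
      (∑ j, c j)! / ((∏ i, ((r i)! : K)) * ∏ j, ((c j)! : K)) := by
  have hrow (g) (hg : g ∈ contingencyTables r c) : ((∏ i, Nat.multinomial univ (g i) : ℕ) : K) =
      (∏ i, ((r i)! : K)) * (∏ i, ∏ j, ((g i j)! : K))⁻¹ := by
    simp only [contingencyTables, mem_filter, Fintype.mem_piFinset, mem_piAntidiag] at hg
    simp_rw [Nat.cast_prod, Nat.cast_multinomial, hg.1 _ |>.1, div_eq_mul_inv, prod_mul_distrib,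
      prod_inv_distrib]
  have hsum := congrArg (Nat.cast : ℕ → K) (sum_contingencyTables_prod_multinomial r c h)
  have hfac (n : ℕ) : (n ! : K) ≠ 0 := by exact_mod_cast n.factorial_ne_zero
  have hr : ∏ i, ((r i)! : K) ≠ 0 := prod_ne_zero_iff.2 fun _ _ => hfac _
  have hc : ∏ j, ((c j)! : K) ≠ 0 := prod_ne_zero_iff.2 fun _ _ => hfac _
  rw [Nat.cast_sum, sum_congr rfl hrow, ← mul_sum, Nat.cast_multinomial, eq_div_iff hc] at hsum
  rw [eq_div_iff (mul_ne_zero hr hc), ← hsum]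
  ring

end ContingencyTables

section SumPermMatrix

variable {n : Type*} [Fintype n] [DecidableEq n] {t : ℕ}

def sumPermMatrix (π : Fin t → Equiv.Perm n) : n → n → ℕ :=
  fun i j => #{s | π s j = i}

theorem Matrix.permanent_pow_eq_sum {R : Type*} [CommSemiring R] (A : Matrix n n R) (t : ℕ) :
    A.permanent ^ t =
      ∑ π : Fin t → Equiv.Perm n, ∏ i, ∏ j, A i j ^ sumPermMatrix π i j := by
  rw [← Fin.prod_const t A.permanent, Matrix.permanent, prod_univ_sum]
  refine sum_congr Fintype.piFinset_univ fun π _ => ?_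
  rw [prod_comm]
  conv_rhs => rw [prod_comm]
  refine prod_congr rfl fun j _ => ?_
  rw [← Finset.prod_fiberwise' univ (fun s => π s j) (fun i => A i j)]
  exact prod_congr rfl fun i _ => prod_const _

theorem sum_sumPermMatrix_row (π : Fin t → Equiv.Perm n) (i : n) :
    ∑ j, sumPermMatrix π i j = t := by
  have hfiber (j : n) : sumPermMatrix π i j = #{s | (π s).symm i = j} := by
    simp only [sumPermMatrix, Equiv.symm_apply_eq, @eq_comm _ i]
  simp_rw [hfiber, ← card_eq_sum_card_fiberwise fun _ _ => mem_univ _, card_univ, Fintype.card_fin]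

theorem sum_sumPermMatrix_col (π : Fin t → Equiv.Perm n) (j : n) :
    ∑ i, sumPermMatrix π i j = t := by
  simp_rw [sumPermMatrix, ← card_eq_sum_card_fiberwise fun _ _ => mem_univ _, card_univ,
    Fintype.card_fin]

theorem sumPermMatrix_mem_contingencyTables (π : Fin t → Equiv.Perm n) :
    sumPermMatrix π ∈ contingencyTables (fun _ => t) (fun _ => t) := by
  simp only [contingencyTables, mem_filter, Fintype.mem_piFinset, mem_piAntidiag]
  exact ⟨fun i => ⟨sum_sumPermMatrix_row π i, fun _ _ => mem_univ _⟩, sum_sumPermMatrix_col π⟩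

end SumPermMatrix

theorem sq_card_div_sum_inv_le_sum_ite_eq {α β K : Type*} [Fintype α] [DecidableEq β] [Field K]
    [LinearOrder K] [IsStrictOrderedRing K] (A : α → β) {T : Finset β} (hA : ∀ x, A x ∈ T)
    {w : β → K} (hw : ∀ b ∈ T, 0 < w b) :
    (Fintype.card α : K) ^ 2 / ∑ b ∈ T, (w b)⁻¹ ≤
      ∑ x, ∑ y, if A x = A y then w (A x) else 0 := by
  set N : β → K := fun b => #{x | A x = b}
  have hcard : (Fintype.card α : K) = ∑ b ∈ T, N b := by
    rw [← card_univ, card_eq_sum_card_fiberwise fun x _ => hA x, Nat.cast_sum]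
  have hcollisions : ∑ x, ∑ y, (if A x = A y then w (A x) else 0) = ∑ b ∈ T, N b ^ 2 / (w b)⁻¹ :=
    calc _ = ∑ x, N (A x) * w (A x) := by
          refine sum_congr rfl fun x _ => ?_
          rw [← sum_filter, sum_const, nsmul_eq_mul]
          simp only [N, eq_comm]
      _ = ∑ b ∈ T, ∑ x with A x = b, N b * w b :=
          (sum_fiberwise_of_maps_to' (fun x _ => hA x) fun b => N b * w b).symm
      _ = _ := by
          refine sum_congr rfl fun b _ => ?_
          rw [sum_const, nsmul_eq_mul, div_inv_eq_mul]
          ring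
  rw [hcard, hcollisions]
  exact sq_sum_div_le_sum_sq_div T N fun b hb => inv_pos.2 (hw b hb)

namespace IsIIDStdComplexGaussianMatrix

variable {Ω : Type*} [MeasurableSpace Ω] {P : Measure Ω} {k : ℕ}
  {M : Ω → Matrix (Fin k) (Fin k) ℂ}

theorem integrable_prod_pow_mul_conj_pow (hM : IsIIDStdComplexGaussianMatrix P M)
    (a b : Fin k → Fin k → ℕ) :
    Integrable (fun ω => ∏ i, ∏ j, M ω i j ^ a i j * starRingEnd ℂ (M ω i j) ^ b i j) P := by
  obtain ⟨hmeas, hindep, hint, -⟩ := hM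
  have hf (p : Fin k × Fin k) : Integrable (fun z => z ^ a p.1 p.2 * starRingEnd ℂ z ^ b p.1 p.2)
      (P.map fun ω => M ω p.1 p.2) :=
    (integrable_map_measure (by fun_prop) (hmeas p.1 p.2).aemeasurable).2 (hint p.1 p.2 _ _)
  simp_rw [← Fintype.prod_prod_type']
  exact hindep.integrable_fun_prod_comp (fun p => (hmeas p.1 p.2).aemeasurable) hf

theorem integral_prod_pow_mul_conj_pow (hM : IsIIDStdComplexGaussianMatrix P M)
    (a b : Fin k → Fin k → ℕ) :
    ∫ ω, ∏ i, ∏ j, M ω i j ^ a i j * starRingEnd ℂ (M ω i j) ^ b i j ∂P =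
      if a = b then ∏ i, ∏ j, ((a i j)! : ℂ) else 0 := by
  obtain ⟨hmeas, hindep, -, hmom⟩ := hM
  have h := hindep.integral_fun_prod_comp (fun p => (hmeas p.1 p.2).aemeasurable)
    (f := fun p z => z ^ a p.1 p.2 * starRingEnd ℂ z ^ b p.1 p.2) fun p => by fun_prop
  simp only [hmom, Fintype.prod_ite_zero] at h
  simp_rw [← Fintype.prod_prod_type', h, Prod.forall, funext_iff]

theorem integral_norm_permanent_pow (hM : IsIIDStdComplexGaussianMatrix P M) (t : ℕ) :
    ∫ ω, ‖(M ω).permanent‖ ^ (2 * t) ∂P =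
      ∑ π : Fin t → Equiv.Perm (Fin k), ∑ σ : Fin t → Equiv.Perm (Fin k),
        if sumPermMatrix π = sumPermMatrix σ then
          ∏ i, ∏ j, ((sumPermMatrix π i j)! : ℝ) else 0 := by
  have hexpand (ω : Ω) : ((‖(M ω).permanent‖ ^ (2 * t) : ℝ) : ℂ) =
      ∑ π : Fin t → Equiv.Perm (Fin k), ∑ σ : Fin t → Equiv.Perm (Fin k),
        ∏ i, ∏ j, M ω i j ^ sumPermMatrix π i j *
          starRingEnd ℂ (M ω i j) ^ sumPermMatrix σ i j := by
    rw [pow_mul, ← Complex.normSq_eq_norm_sq, Complex.ofReal_pow, ← Complex.mul_conj, mul_pow,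
      ← map_pow, Matrix.permanent_pow_eq_sum, map_sum, sum_mul_sum]
    simp_rw [map_prod, map_pow, ← prod_mul_distrib]
  have hint (π σ : Fin t → Equiv.Perm (Fin k)) := hM.integrable_prod_pow_mul_conj_pow
    (sumPermMatrix π) (sumPermMatrix σ)
  apply Complex.ofReal_injective
  rw [← integral_complex_ofReal, integral_congr_ae (.of_forall hexpand),
    integral_finsetSum _ fun π _ => integrable_finsetSum _ fun σ _ => hint π σ]
  simp_rw [integral_finsetSum _ fun σ _ => hint _ σ, hM.integral_prod_pow_mul_conj_pow]
  push_cast [apply_ite (Complex.ofReal)]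
  rfl

end IsIIDStdComplexGaussianMatrix

theorem gaussian_permanent_moment_lower_bound_general {Ω : Type*} [MeasurableSpace Ω]
    (P : Measure Ω) (k t : ℕ)
    (M : Ω → Matrix (Fin k) (Fin k) ℂ)
    (hM : IsIIDStdComplexGaussianMatrix P M) :
    ((k.factorial : ℝ) ^ (2*t) * (t.factorial : ℝ) ^ (2*k)) / ((k*t).factorial : ℝ)
      ≤ ∫ ω, ‖(M ω).permanent‖ ^ (2*t) ∂P := by
  have hcard : (Fintype.card (Fin t → Equiv.Perm (Fin k)) : ℝ) = (k ! : ℝ) ^ t := by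
    simp [Fintype.card_perm]
  have htables := sum_contingencyTables_inv_prod_factorial (K := ℝ)
    (fun _ : Fin k => t) (fun _ : Fin k => t) rfl
  simp only [sum_const, card_univ, Fintype.card_fin, smul_eq_mul, prod_const] at htables
  rw [hM.integral_norm_permanent_pow]
  calc _ = (Fintype.card (Fin t → Equiv.Perm (Fin k)) : ℝ) ^ 2 /
        ∑ g ∈ contingencyTables (fun _ : Fin k => t) (fun _ => t),
          (∏ i, ∏ j, ((g i j)! : ℝ))⁻¹ := by
        rw [hcard, htables]
        field_simp
        ring
    _ ≤ _ := sq_card_div_sum_inv_le_sum_ite_eq sumPermMatrix sumPermMatrix_mem_contingencyTables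
        fun _ _ => by positivity

/-- For all positive integers `k, t`, the `2t`-th moment of the permanent of a `k × k`
i.i.d. complex Gaussian matrix is at least `(k!)^(2t) * (t!)^(2k) / (kt)!`. -/
theorem gaussian_permanent_moment_lower_bound {Ω : Type*} [MeasurableSpace Ω]
    (P : Measure Ω) [IsProbabilityMeasure P] (k t : ℕ) (hk : 0 < k) (ht : 0 < t)
    (M : Ω → Matrix (Fin k) (Fin k) ℂ)
    (hM : IsIIDStdComplexGaussianMatrix P M) :
    ((k.factorial : ℝ) ^ (2*t) * (t.factorial : ℝ) ^ (2*k)) / ((k*t).factorial : ℝ)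
      ≤ ∫ ω, ‖(M ω).permanent‖ ^ (2*t) ∂P :=
  gaussian_permanent_moment_lower_bound_general P k t M hM
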